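/- arXiv:2003.02479 — 8 statements merged into one kernel-verified Lean document; each statement's English description precedes it below -/
import Mathlib

section
/- Let d be a positive integer, ρ a positive semi-definite complex d×d matrix, L a Hermitian d×d matrix, and {Π_x}_{x=1}^n a finite POVM, i.e. each Π_x is positive semi-definite and Σ_x Π_x = I. Then Σ_{x : tr(ρΠ_x) ≠ 0} [Re tr(ρ L Π_x)]² / tr(ρ Π_x) ≤ tr(L ρ L). (This is the chain of inequalities at the heart of the Braunstein–Caves theorem: the Fisher information of any regular measurement is bounded by the quantum Fisher information tr(ρ L²) when L is the symmetric logarithmic derivative.) -/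
/-!
Write `Π = Bᴴ B`. Since `ρ ≥ 0`, `⟪X, Y⟫ = tr (Y ρ Xᴴ)` is a semi-inner product on matrices, and
Cauchy–Schwarz for `X = B L`, `Y = B` gives `(Re tr (ρ L Π))² ≤ tr (ρ Π) · tr (L ρ L Π)`.
Dividing by `tr (ρ Π)` and summing over the outcomes, the right-hand sides add up to
`tr (L ρ L)` because `∑ Π = 1`; the outcomes with `tr (ρ Π) = 0` only drop nonnegative terms.
-/

open Matrix Finset
open scoped ComplexOrder MatrixOrder

namespace Matrix

variable {n 𝕜 : Type*} [Fintype n] [RCLike 𝕜]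

lemma PosSemidef.exists_eq_conjTranspose_mul_self {A : Matrix n n 𝕜} (hA : A.PosSemidef) :
    ∃ B : Matrix n n 𝕜, A = Bᴴ * B := by
  classical
  exact CStarAlgebra.nonneg_iff_eq_star_mul_self.mp hA.nonneg

lemma trace_mul_conjTranspose_mul_self (A B : Matrix n n 𝕜) :
    (A * (Bᴴ * B)).trace = (B * A * Bᴴ).trace := by
  rw [← mul_assoc, trace_mul_comm, mul_assoc]

lemma PosSemidef.trace_mul_nonneg {A B : Matrix n n 𝕜} (hA : A.PosSemidef) (hB : B.PosSemidef) :
    0 ≤ (A * B).trace := by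
  obtain ⟨C, rfl⟩ := hB.exists_eq_conjTranspose_mul_self
  rw [trace_mul_conjTranspose_mul_self]
  exact (hA.mul_mul_conjTranspose_same C).trace_nonneg

lemma PosSemidef.re_trace_sq_le {M : Matrix n n 𝕜} (hM : M.PosSemidef) (X Y : Matrix n n 𝕜) :
    RCLike.re (Y * M * Xᴴ).trace ^ 2 ≤
      RCLike.re (X * M * Xᴴ).trace * RCLike.re (Y * M * Yᴴ).trace := by
  let _ := M.toMatrixSeminormedAddCommGroup hM
  let _ := M.toMatrixInnerProductSpace hM
  calc RCLike.re (Y * M * Xᴴ).trace ^ 2 ≤ ‖(Y * M * Xᴴ).trace‖ ^ 2 := by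
        rw [← sq_abs]; gcongr; exact RCLike.abs_re_le_norm _
    _ = ‖inner 𝕜 X Y‖ * ‖inner 𝕜 Y X‖ := by rw [norm_inner_symm Y X, sq]; rfl
    _ ≤ _ := inner_mul_inner_self_le X Y

lemma sq_re_trace_mul_mul_le {ρ P : Matrix n n 𝕜} (hρ : ρ.PosSemidef) (hP : P.PosSemidef)
    (L : Matrix n n 𝕜) :
    RCLike.re (ρ * L * P).trace ^ 2 ≤
      RCLike.re (ρ * P).trace * RCLike.re (Lᴴ * ρ * L * P).trace := by
  obtain ⟨B, rfl⟩ := hP.exists_eq_conjTranspose_mul_self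
  have h := hρ.re_trace_sq_le (B * Lᴴ) B
  simp only [conjTranspose_mul, conjTranspose_conjTranspose, ← mul_assoc] at h
  rw [trace_mul_conjTranspose_mul_self, trace_mul_conjTranspose_mul_self,
    trace_mul_conjTranspose_mul_self, mul_comm (RCLike.re _)]
  simpa only [← mul_assoc] using h

lemma sq_re_trace_mul_mul_div_le {ρ P : Matrix n n 𝕜} (hρ : ρ.PosSemidef) (hP : P.PosSemidef)
    (hρP : (ρ * P).trace ≠ 0) (L : Matrix n n 𝕜) :
    RCLike.re (ρ * L * P).trace ^ 2 / RCLike.re (ρ * P).trace ≤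
      RCLike.re (Lᴴ * ρ * L * P).trace := by
  have hpos : 0 < RCLike.re (ρ * P).trace :=
    (RCLike.pos_iff.mp ((hρ.trace_mul_nonneg hP).lt_of_ne hρP.symm)).1
  rw [div_le_iff₀' hpos]
  exact sq_re_trace_mul_mul_le hρ hP L

end Matrix

theorem braunstein_caves_bound_general {d n : ℕ}
    (ρ L : Matrix (Fin d) (Fin d) ℂ)
    (hρ : ρ.PosSemidef) (hL : L.IsHermitian)
    (P : Fin n → Matrix (Fin d) (Fin d) ℂ)
    (hP : ∀ x, (P x).PosSemidef)
    (hPsum : ∑ x, P x = 1) :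
    ∑ x ∈ Finset.univ.filter (fun x => (ρ * P x).trace ≠ 0),
        ((ρ * L * P x).trace.re) ^ 2 / ((ρ * P x).trace.re)
      ≤ ((L * ρ * L).trace).re := by
  have hLρL : (L * ρ * L).PosSemidef := by
    simpa only [hL.eq] using hρ.conjTranspose_mul_mul_same L
  calc ∑ x ∈ univ.filter (fun x => (ρ * P x).trace ≠ 0),
        ((ρ * L * P x).trace.re) ^ 2 / ((ρ * P x).trace.re)
      ≤ ∑ x ∈ univ.filter (fun x => (ρ * P x).trace ≠ 0), (L * ρ * L * P x).trace.re :=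
        sum_le_sum fun x hx => by
          simpa only [hL.eq, RCLike.re_to_complex] using
            sq_re_trace_mul_mul_div_le hρ (hP x) (mem_filter.mp hx).2 L
    _ ≤ ∑ x, (L * ρ * L * P x).trace.re :=
        sum_le_sum_of_subset_of_nonneg (filter_subset _ _) fun x _ _ =>
          (RCLike.nonneg_iff.mp (hLρL.trace_mul_nonneg (hP x))).1
    _ = (L * ρ * L).trace.re := by
        rw [← Complex.re_sum, ← trace_sum, ← mul_sum, hPsum, mul_one]

/-- **Braunstein–Caves inequality.** For a positive semi-definite state `ρ`, a Hermitian
symmetric logarithmic derivative `L`, and a finite POVM `P` (positive semi-definite operators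
summing to the identity), the classical Fisher information
`Σ_{x : tr(ρ Π_x) ≠ 0} (Re tr(ρ L Π_x))² / tr(ρ Π_x)` is bounded by `tr(L ρ L)`. -/
theorem braunstein_caves_bound {d n : ℕ} (hd : 0 < d)
    (ρ L : Matrix (Fin d) (Fin d) ℂ)
    (hρ : ρ.PosSemidef) (hL : L.IsHermitian)
    (P : Fin n → Matrix (Fin d) (Fin d) ℂ)
    (hP : ∀ x, (P x).PosSemidef)
    (hPsum : ∑ x, P x = 1) :
    ∑ x ∈ Finset.univ.filter (fun x => (ρ * P x).trace ≠ 0),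
        ((ρ * L * P x).trace.re) ^ 2 / ((ρ * P x).trace.re)
      ≤ ((L * ρ * L).trace).re :=
  braunstein_caves_bound_general ρ L hρ hL P hP hPsum
end

section
/- Let ρ be a positive-definite Hermitian d×d complex matrix with tr(ρ)=1, and let L be a Hermitian d×d matrix with orthonormal eigenbasis {v_j}_{j=1}^d and corresponding real eigenvalues {λ_j}. Set M := (ρL + Lρ)/2. Then Σ_{j=1}^d (v_j† M v_j)² / (v_j† ρ v_j) = tr(ρ L²). (This expresses saturation of the Braunstein–Caves bound: a projective measurement in the eigenbasis of the symmetric logarithmic derivative L, which satisfies ∂_θρ_θ = (ρL+Lρ)/2, attains Fisher information equal to the quantum Fisher information tr(ρL²).) -/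
/-!
Because `v j` is an eigenvector of the Hermitian matrix `L`, it is also a left eigenvector, so
with `p j = v j† ρ v j` we get `v j† M v j = λ j p j` and `v j† ρ L² v j = λ j² p j`. Each term
of the Fisher information is therefore `λ j² p j`, and summing the diagonal entries
`v j† ρ L² v j` over the orthonormal basis `v` gives `tr (ρ L²)`.
-/

open Matrix
open scoped ComplexOrder

namespace Matrix

variable {n R : Type*} [Fintype n]

theorem trace_eq_sum_star_dotProduct_mulVec [DecidableEq n] [CommRing R] [StarRing R]
    (v : n → n → R) (horth : ∀ i j, star (v i) ⬝ᵥ v j = if i = j then 1 else 0)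
    (A : Matrix n n R) :
    A.trace = ∑ j, star (v j) ⬝ᵥ A *ᵥ v j := by
  let V : Matrix n n R := Matrix.of v
  have hV : V.map star * Vᵀ = 1 := by
    ext i j
    simpa [V, mul_apply, one_apply, dotProduct] using horth i j
  calc A.trace = (A * (Vᵀ * V.map star)).trace := by rw [mul_eq_one_comm.mp hV, mul_one]
    _ = (V.map star * A * Vᵀ).trace := by
      rw [← Matrix.mul_assoc, trace_mul_comm, Matrix.mul_assoc]
    _ = ∑ j, star (v j) ⬝ᵥ A *ᵥ v j := by simp only [trace, diag, mul_mul_apply]; rfl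

theorem dotProduct_mul_mulVec_of_mulVec_eq_smul [CommSemiring R] {A L : Matrix n n R}
    {x : n → R} {μ : R} (hx : L *ᵥ x = μ • x) (y : n → R) :
    y ⬝ᵥ (A * L) *ᵥ x = μ * (y ⬝ᵥ A *ᵥ x) := by
  rw [← mulVec_mulVec, hx, mulVec_smul, dotProduct_smul, smul_eq_mul]

theorem IsHermitian.star_vecMul_of_mulVec_eq_smul [CommSemiring R] [StarRing R]
    {L : Matrix n n R} (hL : L.IsHermitian) {x : n → R} {μ : R} (hμ : IsSelfAdjoint μ)
    (hx : L *ᵥ x = μ • x) :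
    star x ᵥ* L = μ • star x := by
  rw [← hL.eq, vecMul_conjTranspose, star_star, hx, star_smul, hμ.star_eq]

theorem IsHermitian.star_dotProduct_mul_mulVec_of_mulVec_eq_smul [CommSemiring R] [StarRing R]
    {L : Matrix n n R} (hL : L.IsHermitian) {x : n → R} {μ : R} (hμ : IsSelfAdjoint μ)
    (hx : L *ᵥ x = μ • x) (A : Matrix n n R) :
    star x ⬝ᵥ (L * A) *ᵥ x = μ * (star x ⬝ᵥ A *ᵥ x) := by
  rw [← mulVec_mulVec, dotProduct_mulVec, hL.star_vecMul_of_mulVec_eq_smul hμ hx,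
    smul_dotProduct, smul_eq_mul]

end Matrix

theorem braunstein_caves_saturation_general {d : ℕ}
    (ρ L : Matrix (Fin d) (Fin d) ℂ)
    (hL : L.IsHermitian)
    (v : Fin d → (Fin d → ℂ)) (lam : Fin d → ℝ)
    (horth : ∀ i j, star (v i) ⬝ᵥ v j = if i = j then 1 else 0)
    (heig : ∀ j, L *ᵥ v j = (lam j : ℂ) • v j)
    (M : Matrix (Fin d) (Fin d) ℂ)
    (hM : M = (2⁻¹ : ℂ) • (ρ * L + L * ρ)) :
    ∑ j, ((star (v j) ⬝ᵥ M *ᵥ v j).re) ^ 2 / ((star (v j) ⬝ᵥ ρ *ᵥ v j).re)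
      = ((ρ * L * L).trace).re := by
  have hM_diag : ∀ j, star (v j) ⬝ᵥ M *ᵥ v j = lam j * (star (v j) ⬝ᵥ ρ *ᵥ v j) := by
    intro j
    rw [hM, smul_mulVec, add_mulVec, dotProduct_smul, dotProduct_add,
      dotProduct_mul_mulVec_of_mulVec_eq_smul (heig j),
      hL.star_dotProduct_mul_mulVec_of_mulVec_eq_smul (Complex.conj_ofReal _) (heig j),
      smul_eq_mul]
    ring
  rw [trace_eq_sum_star_dotProduct_mulVec v horth, Complex.re_sum]
  refine Finset.sum_congr rfl fun j _ => ?_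
  set p := star (v j) ⬝ᵥ ρ *ᵥ v j
  have hρLL : star (v j) ⬝ᵥ (ρ * L * L) *ᵥ v j = ((lam j ^ 2 : ℝ) : ℂ) * p := by
    rw [dotProduct_mul_mulVec_of_mulVec_eq_smul (heig j),
      dotProduct_mul_mulVec_of_mulVec_eq_smul (heig j)]
    push_cast
    ring
  -- `(λ p)² / p = λ² p` holds even at `p = 0`, because `0 / 0 = 0`.
  rw [hM_diag, hρLL, Complex.re_ofReal_mul, Complex.re_ofReal_mul, mul_pow, sq p.re,
    mul_div_assoc, mul_self_div_self]

/-- **Saturation of the Braunstein–Caves bound.** If `ρ` is a positive-definite state with unit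
trace and `L` is Hermitian with orthonormal eigenbasis `v` and real eigenvalues `lam`, then the
projective measurement in the eigenbasis of `L` applied to the model with derivative
`M = (ρL + Lρ)/2` has Fisher information `Σ_j (v_j† M v_j)² / (v_j† ρ v_j) = tr(ρ L²)`. -/
theorem braunstein_caves_saturation {d : ℕ}
    (ρ L : Matrix (Fin d) (Fin d) ℂ)
    (hρ : ρ.PosDef) (hρtr : ρ.trace = 1) (hL : L.IsHermitian)
    (v : Fin d → (Fin d → ℂ)) (lam : Fin d → ℝ)
    (horth : ∀ i j, star (v i) ⬝ᵥ v j = if i = j then 1 else 0)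
    (heig : ∀ j, L *ᵥ v j = (lam j : ℂ) • v j)
    (M : Matrix (Fin d) (Fin d) ℂ)
    (hM : M = (2⁻¹ : ℂ) • (ρ * L + L * ρ)) :
    ∑ j, ((star (v j) ⬝ᵥ M *ᵥ v j).re) ^ 2 / ((star (v j) ⬝ᵥ ρ *ᵥ v j).re)
      = ((ρ * L * L).trace).re :=
  braunstein_caves_saturation_general ρ L hL v lam horth heig M hM
end

section
/- (Saturation of the operator Popoviciu inequality.) Let M be a Hermitian d×d complex matrix, let v_max and v_min be unit eigenvectors of M for its largest eigenvalue λ_max(M) and its smallest eigenvalue λ_min(M) respectively, and let φ ∈ ℝ. Then the unit vector ψ := (v_max + e^{iφ} v_min)/√2 satisfies ⟨ψ, M²ψ⟩ − ⟨ψ, Mψ⟩² = (λ_max(M) − λ_min(M))²/4. -/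
open Matrix

/-!
In the orthonormal pair `vmax, vmin` the state `ψ` has weight `1/2` on each eigenvector, so any
operator with these two eigenvectors has expectation the mean of its two eigenvalues. Applied to
`M` and `M²` this gives `⟨M²⟩ − ⟨M⟩² = (λ²_max + λ²_min)/2 − ((λ_max + λ_min)/2)²
= (λ_max − λ_min)²/4`.
-/

theorem Matrix.mul_self_mulVec_of_mulVec_eq_smul {n R : Type*} [Fintype n] [CommSemiring R]
    {N : Matrix n n R} {v : n → R} {a : R} (h : N *ᵥ v = a • v) :
    (N * N) *ᵥ v = (a * a) • v := by
  rw [← mulVec_mulVec, h, mulVec_smul, h, smul_smul]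

theorem Matrix.star_dotProduct_mulVec_add_smul_of_orthonormal_eigen {n R : Type*} [Fintype n]
    [CommRing R] [StarRing R] {N : Matrix n n R} {u v : n → R} {a b x y : R} (hu : star u ⬝ᵥ u = 1) (hv : star v ⬝ᵥ v = 1)
    (huv : star u ⬝ᵥ v = 0) (hNu : N *ᵥ u = a • u) (hNv : N *ᵥ v = b • v) :
    star (x • u + y • v) ⬝ᵥ N *ᵥ (x • u + y • v) = star x * x * a + star y * y * b := by
  have hvu : star v ⬝ᵥ u = 0 := by rw [star_dotProduct, huv, star_zero]
  simp only [mulVec_add, mulVec_smul, hNu, hNv, star_add, star_smul, add_dotProduct,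
    dotProduct_add, smul_dotProduct, dotProduct_smul, hu, hv, huv, hvu, smul_eq_mul]
  ring

theorem Complex.star_inv_sqrt_two_mul_self :
    star ((Real.sqrt 2 : ℂ))⁻¹ * ((Real.sqrt 2 : ℂ))⁻¹ = ((1 / 2 : ℝ) : ℂ) := by
  rw [star_inv₀, Complex.star_def, Complex.conj_ofReal, ← mul_inv, ← Complex.ofReal_mul,
    Real.mul_self_sqrt zero_le_two]
  norm_num

theorem operator_popoviciu_saturation_general {d : ℕ}
    (M : Matrix (Fin d) (Fin d) ℂ)
    (lmax lmin : ℝ)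
    (vmax vmin : Fin d → ℂ) (φ : ℝ)
    (hvmax1 : star vmax ⬝ᵥ vmax = 1) (hvmin1 : star vmin ⬝ᵥ vmin = 1)
    (horth : star vmax ⬝ᵥ vmin = 0)
    (hevmax : M *ᵥ vmax = (lmax : ℂ) • vmax)
    (hevmin : M *ᵥ vmin = (lmin : ℂ) • vmin)
    (ψ : Fin d → ℂ)
    (hψ : ψ = ((Real.sqrt 2 : ℂ))⁻¹ • (vmax + Complex.exp (Complex.I * φ) • vmin)) :
    (star ψ ⬝ᵥ (M * M) *ᵥ ψ).re - ((star ψ ⬝ᵥ M *ᵥ ψ).re) ^ 2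
      = (lmax - lmin) ^ 2 / 4 := by
  set c : ℂ := ((Real.sqrt 2 : ℂ))⁻¹
  set e : ℂ := Complex.exp (Complex.I * φ)
  have hψ' : ψ = c • vmax + (c * e) • vmin := by rw [hψ, smul_add, smul_smul]
  have hc : star c * c = ((1 / 2 : ℝ) : ℂ) := Complex.star_inv_sqrt_two_mul_self
  have he : star e * e = 1 := by
    rw [Complex.star_def, Complex.conj_mul', Complex.norm_exp_I_mul_ofReal]
    norm_num
  have hce : star (c * e) * (c * e) = ((1 / 2 : ℝ) : ℂ) := by
    rw [star_mul', mul_mul_mul_comm, hc, he, mul_one]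
  have h1 := star_dotProduct_mulVec_add_smul_of_orthonormal_eigen (x := c) (y := c * e)
    hvmax1 hvmin1 horth hevmax hevmin
  have h2 := star_dotProduct_mulVec_add_smul_of_orthonormal_eigen (x := c) (y := c * e)
    hvmax1 hvmin1 horth (mul_self_mulVec_of_mulVec_eq_smul hevmax)
    (mul_self_mulVec_of_mulVec_eq_smul hevmin)
  rw [hψ', h1, h2, hc, hce]
  norm_cast
  ring

/-- **Saturation of the operator Popoviciu inequality.** If `vmax` and `vmin` are orthogonal unit
eigenvectors of a Hermitian matrix `M` for its largest and smallest eigenvalues, then the unit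
vector `ψ = (vmax + e^{iφ} vmin)/√2` satisfies
`⟨ψ, M²ψ⟩ − ⟨ψ, Mψ⟩² = (λ_max(M) − λ_min(M))²/4`. -/
theorem operator_popoviciu_saturation {d : ℕ} [NeZero d]
    (M : Matrix (Fin d) (Fin d) ℂ) (hM : M.IsHermitian)
    (lmax lmin : ℝ)
    (hlmax : lmax = Finset.univ.sup' Finset.univ_nonempty hM.eigenvalues)
    (hlmin : lmin = Finset.univ.inf' Finset.univ_nonempty hM.eigenvalues)
    (vmax vmin : Fin d → ℂ) (φ : ℝ)
    (hvmax1 : star vmax ⬝ᵥ vmax = 1) (hvmin1 : star vmin ⬝ᵥ vmin = 1)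
    (horth : star vmax ⬝ᵥ vmin = 0)
    (hevmax : M *ᵥ vmax = (lmax : ℂ) • vmax)
    (hevmin : M *ᵥ vmin = (lmin : ℂ) • vmin)
    (ψ : Fin d → ℂ)
    (hψ : ψ = ((Real.sqrt 2 : ℂ))⁻¹ • (vmax + Complex.exp (Complex.I * φ) • vmin)) :
    (star ψ ⬝ᵥ (M * M) *ᵥ ψ).re - ((star ψ ⬝ᵥ M *ᵥ ψ).re) ^ 2
      = (lmax - lmin) ^ 2 / 4 :=
  operator_popoviciu_saturation_general M lmax lmin vmax vmin φ hvmax1 hvmin1 horth hevmax hevmin ψ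
    hψ
end

section
/- (Upper bound for controlled energy measurements.) Let U, S : ℝ → (d×d complex matrices) be families of unitary matrices differentiable at θ₀ (U(θ) = exp(−itH_θ) is the unitary encoding generated by a parameter-dependent Hamiltonian and S(θ) is the unitary diagonalizing H_θ). Let ρ₀ be a positive semi-definite d×d matrix with tr(ρ₀) = 1 and let V be any fixed unitary d×d matrix. Define Ũ(θ) := S(θ) V U(θ) and the probabilities p_j(θ) := (Ũ(θ) ρ₀ Ũ(θ)†)_{jj} for j = 1,…,d. Then the Fisher information of the controlled energy measurement, Σ_{j : p_j(θ₀) ≠ 0} (p_j′(θ₀))² / p_j(θ₀), is bounded above by [σ(g[U]) + σ(g[S])]², where g[U] := i U′(θ₀)U(θ₀)† and g[S] := i S′(θ₀)S(θ₀)† are the Hermitian local generators and σ(M) := λ_max(M) − λ_min(M) is the spectral gap. -/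
/-!
Write `W = S V U` and `ρ = W ρ₀ W†`. Since `W` stays unitary, its local generator `G = i W' W†`
is Hermitian and `W' = -i G W`, so `ρ' = -i [G, ρ]` and `p_j' = 2 Im (G ρ)_jj`; as `ρ_jj` is
real, `G` may be replaced by `X = G - c` for any real `c`. Writing `ρ = A A†`, Cauchy–Schwarz
gives `(Im (X ρ)_jj)² ≤ p_j Σ_k |(X A)_jk|²`, and summing over `j` bounds the Fisher information
by `4 ‖X‖² tr ρ = 4 ‖X‖²` (operator norm). Finally `G = g[S] + (S V) g[U] (S V)†`, and shifting
a Hermitian matrix by the midpoint of its spectrum leaves a matrix of norm half its spectral gap,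
so `‖X‖ ≤ (σ(g[U]) + σ(g[S])) / 2` for a suitable `c`.
-/

open Matrix
open scoped ComplexOrder

/-- The spectral gap of a matrix: the difference between the largest and smallest eigenvalue
when the matrix is Hermitian (and `0` otherwise, by convention). -/
noncomputable def specGap {d : ℕ} [NeZero d] (M : Matrix (Fin d) (Fin d) ℂ) : ℝ :=
  if h : M.IsHermitian then
    Finset.univ.sup' Finset.univ_nonempty h.eigenvalues
      - Finset.univ.inf' Finset.univ_nonempty h.eigenvalues
  else 0

open scoped Matrix.Norms.L2Operator MatrixOrder

def HasEntrywiseDerivAt {m n : Type*} (A : ℝ → Matrix m n ℂ) (A' : Matrix m n ℂ) (θ : ℝ) :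
    Prop :=
  ∀ i j, HasDerivAt (fun t => A t i j) (A' i j) θ

namespace HasEntrywiseDerivAt

variable {l m n : Type*} {θ : ℝ}

theorem mul [Fintype m] {A : ℝ → Matrix l m ℂ} {B : ℝ → Matrix m n ℂ} {A' : Matrix l m ℂ}
    {B' : Matrix m n ℂ} (hA : HasEntrywiseDerivAt A A' θ) (hB : HasEntrywiseDerivAt B B' θ) :
    HasEntrywiseDerivAt (fun t => A t * B t) (A' * B θ + A θ * B') θ := fun i j => by
  simp only [mul_apply, Matrix.add_apply, ← Finset.sum_add_distrib]
  exact HasDerivAt.fun_sum fun k _ => (hA i k).fun_mul (hB k j)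

theorem mul_const [Fintype m] {A : ℝ → Matrix l m ℂ} {A' : Matrix l m ℂ}
    (hA : HasEntrywiseDerivAt A A' θ) (C : Matrix m n ℂ) :
    HasEntrywiseDerivAt (fun t => A t * C) (A' * C) θ := fun i j => by
  simp only [mul_apply]
  exact HasDerivAt.fun_sum fun k _ => (hA i k).mul_const (C k j)

theorem conjTranspose {A : ℝ → Matrix m n ℂ} {A' : Matrix m n ℂ}
    (hA : HasEntrywiseDerivAt A A' θ) : HasEntrywiseDerivAt (fun t => (A t)ᴴ) A'ᴴ θ :=
  fun i j => by simpa only [conjTranspose_apply] using (hA j i).star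

end HasEntrywiseDerivAt

def localGenerator {n : Type*} [Fintype n] (W W' : Matrix n n ℂ) : Matrix n n ℂ :=
  Complex.I • (W' * Wᴴ)

theorem re_add_conjTranspose_apply_self {n : Type*} (M : Matrix n n ℂ) (j : n) :
    ((M + Mᴴ) j j).re = 2 * (M j j).re := by
  simp only [Matrix.add_apply, conjTranspose_apply, Complex.add_re, Complex.star_def,
    Complex.conj_re]
  ring

section LocalGenerator

variable {n : Type*} [Fintype n] [DecidableEq n]

theorem localGenerator_mul {A B A' B' : Matrix n n ℂ} (hB : B ∈ unitary (Matrix n n ℂ)) :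
    localGenerator (A * B) (A' * B + A * B') =
      localGenerator A A' + A * localGenerator B B' * Aᴴ := by
  simp only [localGenerator, conjTranspose_mul, Matrix.add_mul, Matrix.mul_smul, Matrix.smul_mul,
    smul_add, Matrix.mul_assoc]
  rw [← Matrix.mul_assoc B, ← star_eq_conjTranspose B, Unitary.mul_star_self_of_mem hB,
    Matrix.one_mul]

theorem localGenerator_mul_const {A A' V : Matrix n n ℂ} (hV : V ∈ unitary (Matrix n n ℂ)) :
    localGenerator (A * V) (A' * V) = localGenerator A A' := by
  rw [localGenerator, localGenerator, conjTranspose_mul, Matrix.mul_assoc, ← Matrix.mul_assoc V,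
    ← star_eq_conjTranspose V, Unitary.mul_star_self_of_mem hV, Matrix.one_mul]

theorem isHermitian_localGenerator {W : ℝ → Matrix n n ℂ} {W' : Matrix n n ℂ} {θ : ℝ}
    (hW : ∀ t, W t ∈ unitary (Matrix n n ℂ)) (hW' : HasEntrywiseDerivAt W W' θ) :
    (localGenerator (W θ) W').IsHermitian := by
  -- differentiate `W t * (W t)ᴴ = 1`
  have hskew : W' * (W θ)ᴴ + W θ * W'ᴴ = 0 := by
    ext i j
    have hconst : (fun t => (W t * (W t)ᴴ) i j) = fun _ => (1 : Matrix n n ℂ) i j := by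
      funext t; rw [← star_eq_conjTranspose, Unitary.mul_star_self_of_mem (hW t)]
    have h := (hW'.mul hW'.conjTranspose) i j
    rw [hconst] at h
    simpa using h.unique (hasDerivAt_const θ _)
  rw [IsHermitian, localGenerator, conjTranspose_smul, conjTranspose_mul,
    conjTranspose_conjTranspose, eq_neg_of_add_eq_zero_right hskew]
  simp [Complex.conj_I]

theorem norm_localGenerator_mul_sub_le {A B A' B' : Matrix n n ℂ}
    (hA : A ∈ unitary (Matrix n n ℂ)) (hB : B ∈ unitary (Matrix n n ℂ)) (a b : ℝ) :
    ‖localGenerator (A * B) (A' * B + A * B') - algebraMap ℝ (Matrix n n ℂ) (a + b)‖ ≤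
      ‖localGenerator A A' - algebraMap ℝ _ a‖ + ‖localGenerator B B' - algebraMap ℝ _ b‖ := by
  have hconj : A * algebraMap ℝ (Matrix n n ℂ) b * Aᴴ = algebraMap ℝ _ b := by
    rw [← Algebra.commutes, Matrix.mul_assoc, ← star_eq_conjTranspose,
      Unitary.mul_star_self_of_mem hA, Matrix.mul_one]
  have hsplit : localGenerator (A * B) (A' * B + A * B') - algebraMap ℝ _ (a + b) =
      (localGenerator A A' - algebraMap ℝ _ a) +
        A * (localGenerator B B' - algebraMap ℝ _ b) * Aᴴ := by
    rw [localGenerator_mul hB, Matrix.mul_sub, Matrix.sub_mul, hconj, map_add]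
    abel
  rw [hsplit]
  refine (norm_add_le _ _).trans_eq ?_
  rw [← star_eq_conjTranspose, CStarRing.norm_mul_mem_unitary _ (Unitary.star_mem hA),
    CStarRing.norm_mem_unitary_mul _ hA]

theorem hasDerivAt_re_mul_mul_conjTranspose_apply_self {W : ℝ → Matrix n n ℂ}
    {W' : Matrix n n ℂ} {θ : ℝ} (hW' : HasEntrywiseDerivAt W W' θ)
    (hW : W θ ∈ unitary (Matrix n n ℂ)) {ρ₀ : Matrix n n ℂ} (hρ₀ : ρ₀.IsHermitian) (j : n) :
    HasDerivAt (fun t => ((W t * ρ₀ * (W t)ᴴ) j j).re)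
      (2 * ((localGenerator (W θ) W' * (W θ * ρ₀ * (W θ)ᴴ)) j j).im) θ := by
  have hW'G : W' = -Complex.I • (localGenerator (W θ) W' * W θ) := by
    rw [localGenerator, smul_mul, Matrix.mul_assoc, ← star_eq_conjTranspose,
      Unitary.star_mul_self_of_mem hW, Matrix.mul_one, smul_smul]
    simp
  have hM : W' * ρ₀ * (W θ)ᴴ =
      -Complex.I • (localGenerator (W θ) W' * (W θ * ρ₀ * (W θ)ᴴ)) := by
    conv_lhs => rw [hW'G]
    simp only [smul_mul, Matrix.mul_assoc]
  have hderiv : W' * ρ₀ * (W θ)ᴴ + W θ * ρ₀ * W'ᴴ =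
      W' * ρ₀ * (W θ)ᴴ + (W' * ρ₀ * (W θ)ᴴ)ᴴ := by
    simp only [conjTranspose_mul, conjTranspose_conjTranspose, hρ₀.eq, Matrix.mul_assoc]
  have h : HasDerivAt (fun t => ((W t * ρ₀ * (W t)ᴴ) j j).re)
      ((W' * ρ₀ * (W θ)ᴴ + W θ * ρ₀ * W'ᴴ) j j).re θ :=
    Complex.reCLM.hasFDerivAt.comp_hasDerivAt θ (((hW'.mul_const ρ₀).mul hW'.conjTranspose) j j)
  rw [hderiv, re_add_conjTranspose_apply_self, hM] at h
  simpa using h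

theorem im_sub_algebraMap_mul_apply_self {ρ : Matrix n n ℂ} (hρ : ρ.IsHermitian)
    (X : Matrix n n ℂ) (c : ℝ) (j : n) :
    (((X - algebraMap ℝ (Matrix n n ℂ) c) * ρ) j j).im = ((X * ρ) j j).im := by
  have hρjj : (ρ j j).im = 0 := by
    rw [← hρ.coe_re_apply_self j]; rfl
  simp [Matrix.sub_mul, Algebra.algebraMap_eq_smul_one, hρjj]

end LocalGenerator

theorem exists_norm_sub_algebraMap_le_specGap {d : ℕ} [NeZero d]
    {H : Matrix (Fin d) (Fin d) ℂ} (hH : H.IsHermitian) :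
    ∃ c : ℝ, ‖H - algebraMap ℝ (Matrix (Fin d) (Fin d) ℂ) c‖ ≤ specGap H / 2 := by
  set M := Finset.univ.sup' Finset.univ_nonempty hH.eigenvalues
  set m := Finset.univ.inf' Finset.univ_nonempty hH.eigenvalues
  refine ⟨(M + m) / 2, ?_⟩
  have hspec : ∀ x ∈ spectrum ℝ (H - algebraMap ℝ _ ((M + m) / 2)), |x| ≤ (M - m) / 2 := by
    rw [← spectrum.sub_singleton_eq, hH.spectrum_real_eq_range_eigenvalues]
    rintro _ ⟨_, ⟨i, rfl⟩, _, rfl, rfl⟩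
    have hM : hH.eigenvalues i ≤ M := Finset.le_sup' _ (Finset.mem_univ i)
    have hm : m ≤ hH.eigenvalues i := Finset.inf'_le _ (Finset.mem_univ i)
    rw [abs_le]
    constructor <;> linarith
  have hsa : IsSelfAdjoint (H - algebraMap ℝ _ ((M + m) / 2)) :=
    hH.isSelfAdjoint.sub (.algebraMap _ (.all _))
  rw [show specGap H = M - m from dif_pos hH]
  rcases CStarAlgebra.norm_or_neg_norm_mem_spectrum hsa with h | h
  · simpa using hspec _ h
  · simpa using hspec _ h

noncomputable def fisherInformation {ι : Type*} [Fintype ι] (p p' : ι → ℝ) : ℝ :=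
  ∑ j ∈ Finset.univ.filter (fun j => p j ≠ 0), p' j ^ 2 / p j

section FisherInformation

variable {n : Type*} [Fintype n]

theorem re_mul_conjTranspose_apply_self (A : Matrix n n ℂ) (j : n) :
    ((A * Aᴴ) j j).re = ∑ k, ‖A j k‖ ^ 2 := by
  simp only [mul_apply, conjTranspose_apply, Complex.star_def, Complex.mul_conj, Complex.re_sum,
    Complex.normSq_eq_norm_sq, Complex.ofReal_re]

theorem norm_mul_mul_conjTranspose_apply_self_sq_le (X A : Matrix n n ℂ) (j : n) :
    ‖(X * A * Aᴴ) j j‖ ^ 2 ≤ (∑ k, ‖(X * A) j k‖ ^ 2) * ∑ k, ‖A j k‖ ^ 2 := by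
  have h : ‖(X * A * Aᴴ) j j‖ ≤ ∑ k, ‖(X * A) j k‖ * ‖A j k‖ := by
    rw [mul_apply]
    refine (norm_sum_le _ _).trans_eq ?_
    simp
  calc ‖(X * A * Aᴴ) j j‖ ^ 2 ≤ (∑ k, ‖(X * A) j k‖ * ‖A j k‖) ^ 2 := by gcongr
    _ ≤ _ := Finset.sum_mul_sq_le_sq_mul_sq _ _ _

variable [DecidableEq n]

theorem sum_sum_norm_mul_apply_sq_le (X A : Matrix n n ℂ) :
    ∑ j, ∑ k, ‖(X * A) j k‖ ^ 2 ≤ ‖X‖ ^ 2 * ∑ j, ∑ k, ‖A j k‖ ^ 2 := by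
  rw [Finset.sum_comm, Finset.sum_comm (f := fun j k => ‖A j k‖ ^ 2), Finset.mul_sum]
  refine Finset.sum_le_sum fun k _ => ?_
  have h := l2_opNorm_mulVec X (WithLp.toLp 2 fun l => A l k)
  rw [← sq_le_sq₀ (norm_nonneg _) (by positivity), mul_pow, EuclideanSpace.norm_sq_eq,
    EuclideanSpace.norm_sq_eq] at h
  simpa [mulVec, dotProduct, mul_apply] using h

theorem fisherInformation_le {ρ : Matrix n n ℂ} (hρ : ρ.PosSemidef) (X : Matrix n n ℂ) :
    fisherInformation (fun j => (ρ j j).re) (fun j => 2 * ((X * ρ) j j).im)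
      ≤ 4 * ‖X‖ ^ 2 * ρ.trace.re := by
  obtain ⟨B, rfl⟩ := CStarAlgebra.nonneg_iff_eq_star_mul_self.mp hρ.nonneg
  set A := Bᴴ
  rw [show star B * B = A * Aᴴ by simp [A, star_eq_conjTranspose]]
  set q : n → ℝ := fun j => ∑ k, ‖(X * A) j k‖ ^ 2
  have hterm : ∀ j, ((A * Aᴴ) j j).re ≠ 0 →
      (2 * ((X * (A * Aᴴ)) j j).im) ^ 2 / ((A * Aᴴ) j j).re ≤ 4 * q j := by
    intro j hj
    have hpos : 0 < ((A * Aᴴ) j j).re :=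
      lt_of_le_of_ne (by rw [re_mul_conjTranspose_apply_self]; positivity) hj.symm
    have him : ((X * (A * Aᴴ)) j j).im ^ 2 ≤ ‖(X * (A * Aᴴ)) j j‖ ^ 2 := by
      rw [← sq_abs]; gcongr; exact Complex.abs_im_le_norm _
    have hcs := norm_mul_mul_conjTranspose_apply_self_sq_le X A j
    rw [← re_mul_conjTranspose_apply_self A j, Matrix.mul_assoc] at hcs
    rw [div_le_iff₀ hpos]
    nlinarith
  calc fisherInformation (fun j => ((A * Aᴴ) j j).re) (fun j => 2 * ((X * (A * Aᴴ)) j j).im)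
      ≤ ∑ j ∈ Finset.univ.filter (fun j => ((A * Aᴴ) j j).re ≠ 0), 4 * q j :=
        Finset.sum_le_sum fun j hj => hterm j (Finset.mem_filter.mp hj).2
    _ ≤ ∑ j, 4 * q j :=
        Finset.sum_le_sum_of_subset_of_nonneg (Finset.filter_subset _ _)
          fun j _ _ => by positivity
    _ = 4 * ∑ j, q j := (Finset.mul_sum _ _ _).symm
    _ ≤ 4 * (‖X‖ ^ 2 * ∑ j, ∑ k, ‖A j k‖ ^ 2) := by
        gcongr; exact sum_sum_norm_mul_apply_sq_le X A
    _ = 4 * ‖X‖ ^ 2 * (A * Aᴴ).trace.re := by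
        simp only [trace, diag, Complex.re_sum, re_mul_conjTranspose_apply_self]; ring

end FisherInformation

/-- **Upper bound for controlled energy measurements.** Let `U, S : ℝ → Matrix` be families of
unitary matrices differentiable at `θ₀`, `ρ₀` a state, and `V` a fixed unitary control. With
`Ũ(θ) = S(θ) V U(θ)` and outcome probabilities `p_j(θ) = (Ũ(θ)ρ₀Ũ(θ)†)_{jj}`, the Fisher
information `Σ_{j : p_j(θ₀) ≠ 0} (p_j′(θ₀))²/p_j(θ₀)` is bounded by
`[σ(g[U]) + σ(g[S])]²`, where `g[W] = i W′(θ₀)W(θ₀)†` are the local generators. -/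
theorem controlled_energy_measurement_bound {d : ℕ} [NeZero d]
    (U S : ℝ → Matrix (Fin d) (Fin d) ℂ) (θ₀ : ℝ)
    (hUunit : ∀ θ, (U θ)ᴴ * U θ = 1)
    (hSunit : ∀ θ, (S θ)ᴴ * S θ = 1)
    (ρ₀ : Matrix (Fin d) (Fin d) ℂ)
    (hρ : ρ₀.PosSemidef) (hρtr : ρ₀.trace = 1)
    (V : Matrix (Fin d) (Fin d) ℂ) (hVunit : Vᴴ * V = 1)
    (U' S' : Matrix (Fin d) (Fin d) ℂ)
    (hU' : ∀ i j, HasDerivAt (fun θ => U θ i j) (U' i j) θ₀)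
    (hS' : ∀ i j, HasDerivAt (fun θ => S θ i j) (S' i j) θ₀)
    (p' : Fin d → ℝ)
    (hp' : ∀ j, HasDerivAt
        (fun θ => ((S θ * V * U θ * ρ₀ * (S θ * V * U θ)ᴴ) j j).re) (p' j) θ₀) :
    ∑ j ∈ Finset.univ.filter
        (fun j => ((S θ₀ * V * U θ₀ * ρ₀ * (S θ₀ * V * U θ₀)ᴴ) j j).re ≠ 0),
      (p' j) ^ 2 / ((S θ₀ * V * U θ₀ * ρ₀ * (S θ₀ * V * U θ₀)ᴴ) j j).re
    ≤ (specGap (Complex.I • (U' * (U θ₀)ᴴ)) + specGap (Complex.I • (S' * (S θ₀)ᴴ))) ^ 2 := by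
  change _ ≤ (specGap (localGenerator (U θ₀) U') + specGap (localGenerator (S θ₀) S')) ^ 2
  have hU θ : U θ ∈ unitary (Matrix (Fin d) (Fin d) ℂ) := mem_unitaryGroup_iff'.mpr (hUunit θ)
  have hS θ : S θ ∈ unitary (Matrix (Fin d) (Fin d) ℂ) := mem_unitaryGroup_iff'.mpr (hSunit θ)
  have hV : V ∈ unitary (Matrix (Fin d) (Fin d) ℂ) := mem_unitaryGroup_iff'.mpr hVunit
  have hSV : S θ₀ * V ∈ unitary (Matrix (Fin d) (Fin d) ℂ) := mul_mem (hS θ₀) hV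
  have hW : S θ₀ * V * U θ₀ ∈ unitary (Matrix (Fin d) (Fin d) ℂ) := mul_mem hSV (hU θ₀)
  have hW' : HasEntrywiseDerivAt (fun θ => S θ * V * U θ) (S' * V * U θ₀ + S θ₀ * V * U') θ₀ :=
    (HasEntrywiseDerivAt.mul_const hS' V).mul hU'
  obtain ⟨cU, hcU⟩ := exists_norm_sub_algebraMap_le_specGap (isHermitian_localGenerator hU hU')
  obtain ⟨cS, hcS⟩ := exists_norm_sub_algebraMap_le_specGap (isHermitian_localGenerator hS hS')
  set W := S θ₀ * V * U θ₀
  set ρ := W * ρ₀ * Wᴴ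
  set X := localGenerator W (S' * V * U θ₀ + S θ₀ * V * U') - algebraMap ℝ _ (cS + cU)
  have hρW : ρ.PosSemidef := hρ.mul_mul_conjTranspose_same W
  have hp'X : p' = fun j => 2 * ((X * ρ) j j).im := funext fun j => by
    rw [(hp' j).unique (hasDerivAt_re_mul_mul_conjTranspose_apply_self hW' hW hρ.1 j),
      im_sub_algebraMap_mul_apply_self hρW.1]
  have hX : ‖X‖ ≤
      (specGap (localGenerator (U θ₀) U') + specGap (localGenerator (S θ₀) S')) / 2 := by
    have h := norm_localGenerator_mul_sub_le (A' := S' * V) (B' := U') hSV (hU θ₀) cS cU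
    rw [localGenerator_mul_const hV] at h
    linarith
  have htr : ρ.trace = 1 := by
    rw [trace_mul_cycle, ← star_eq_conjTranspose, Unitary.star_mul_self_of_mem hW, Matrix.one_mul,
      hρtr]
  calc _ = fisherInformation (fun j => (ρ j j).re) (fun j => 2 * ((X * ρ) j j).im) := by
        rw [← hp'X]; rfl
    _ ≤ 4 * ‖X‖ ^ 2 * ρ.trace.re := fisherInformation_le hρW X
    _ ≤ _ := by
        rw [htr, Complex.one_re]
        nlinarith [norm_nonneg X]
end

section
/- (Extended convexity of the quantum Fisher information.) Let I be a finite index set, and for each i ∈ I let θ ↦ ρ_i(θ) be a family of positive-definite Hermitian d×d matrices with trace 1, differentiable at θ₀, and θ ↦ λ_i(θ) strictly positive differentiable weights with Σ_i λ_i(θ) = 1. Let ρ(θ) := Σ_i λ_i(θ) ρ_i(θ). Suppose L and L_i are Hermitian matrices satisfying the symmetric-logarithmic-derivative equations ρ′(θ₀) = (ρ(θ₀)L + Lρ(θ₀))/2 and ρ_i′(θ₀) = (ρ_i(θ₀)L_i + L_iρ_i(θ₀))/2. Then tr(ρ(θ₀) L²) ≤ Σ_i λ_i(θ₀) tr(ρ_i(θ₀)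 L_i²) + Σ_i (λ_i′(θ₀))² / λ_i(θ₀). -/
open Matrix
open scoped ComplexOrder

/-!
Write `⟨A, B⟩ = ∑ i, λᵢ Re tr(ρᵢ Aᵢ Bᵢ)`, a semi-inner product on families of Hermitian matrices.
The classical term `λᵢ' ρᵢ` of `ρ' = ∑ i, (λᵢ ρᵢ' + λᵢ' ρᵢ)` is absorbed into the SLD of `λᵢ ρᵢ` as
the scalar shift `Mᵢ = Lᵢ + (λᵢ'/λᵢ) 1`. Pairing `ρ'` with `L` then gives
`F := Re tr(ρ L²) = ⟨M, L⟩`, while directly `F = ⟨L, L⟩`. So `⟨M - L, L⟩ = 0` and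
`F = ‖L‖² ≤ ‖M‖²`, which is the right-hand side because `tr ρᵢ = 1` and `tr(ρᵢ Lᵢ) = tr ρᵢ' = 0`.
-/

namespace Matrix

variable {n : Type*}

lemma hasDerivAt_sum_smul_apply {ι : Type*} [Fintype ι] {ρ : ι → ℝ → Matrix n n ℂ}
    {lam : ι → ℝ → ℝ} {ρ' : ι → Matrix n n ℂ} {lam' : ι → ℝ} {θ₀ : ℝ}
    (hρ : ∀ i a b, HasDerivAt (fun θ => ρ i θ a b) (ρ' i a b) θ₀)
    (hlam : ∀ i, HasDerivAt (lam i) (lam' i) θ₀) (a b : n) :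
    HasDerivAt (fun θ => (∑ i, lam i θ • ρ i θ) a b)
      ((∑ i, (lam i θ₀ • ρ' i + lam' i • ρ i θ₀)) a b) θ₀ := by
  simp only [sum_apply, add_apply, smul_apply]
  exact HasDerivAt.fun_sum fun i _ => (hlam i).fun_smul (hρ i a b)

variable [Fintype n]

lemma PosSemidef.re_trace_mul_mul_self_nonneg {ρ A : Matrix n n ℂ} (hρ : ρ.PosSemidef)
    (hA : A.IsHermitian) : 0 ≤ (ρ * A * A).trace.re := by
  have h := (Complex.nonneg_iff.mp (hρ.conjTranspose_mul_mul_same A).trace_nonneg).1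
  rwa [hA.eq, trace_mul_cycle, trace_mul_cycle] at h

lemma IsHermitian.re_trace_mul_mul_comm {ρ A B : Matrix n n ℂ} (hρ : ρ.IsHermitian)
    (hA : A.IsHermitian) (hB : B.IsHermitian) :
    (ρ * A * B).trace.re = (ρ * B * A).trace.re := by
  have h : (ρ * B * A).trace = star (ρ * A * B).trace := by
    rw [← trace_conjTranspose, conjTranspose_mul, conjTranspose_mul, hρ.eq, hA.eq, hB.eq,
      Matrix.mul_assoc, trace_mul_comm, Matrix.mul_assoc]
  rw [h, Complex.star_def, Complex.conj_re]

lemma PosSemidef.two_mul_re_trace_mul_mul_le {ρ A B : Matrix n n ℂ} (hρ : ρ.PosSemidef)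
    (hA : A.IsHermitian) (hB : B.IsHermitian) :
    2 * (ρ * A * B).trace.re ≤ (ρ * A * A).trace.re + (ρ * B * B).trace.re := by
  have h := hρ.re_trace_mul_mul_self_nonneg (hA.sub hB)
  have hsymm := hρ.isHermitian.re_trace_mul_mul_comm hA hB
  rw [show ρ * (A - B) * (A - B) = ρ * A * A - ρ * A * B - ρ * B * A + ρ * B * B by noncomm_ring]
    at h
  simp only [trace_add, trace_sub, Complex.add_re, Complex.sub_re] at h
  linarith

/-- Pythagoras for the semi-inner product `⟨A, B⟩ = ∑ i, w i * Re tr(ρ i * A i * B i)`: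
`⟨A - B, B⟩ = 0` forces `‖B‖ ≤ ‖A‖`. -/
lemma sum_re_trace_mul_mul_self_le {ι : Type*} [Fintype ι] {w : ι → ℝ} (hw : ∀ i, 0 ≤ w i)
    {ρ A : ι → Matrix n n ℂ} (hρ : ∀ i, (ρ i).PosSemidef) (hA : ∀ i, (A i).IsHermitian)
    {B : Matrix n n ℂ} (hB : B.IsHermitian)
    (h : ∑ i, w i * (ρ i * A i * B).trace.re = ∑ i, w i * (ρ i * B * B).trace.re) :
    ∑ i, w i * (ρ i * B * B).trace.re ≤ ∑ i, w i * (ρ i * A i * A i).trace.re := by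
  have hsum := Finset.sum_le_sum fun i (_ : i ∈ Finset.univ) =>
    mul_le_mul_of_nonneg_left ((hρ i).two_mul_re_trace_mul_mul_le (hA i) hB) (hw i)
  simp only [mul_add, Finset.sum_add_distrib, mul_left_comm _ (2 : ℝ), ← Finset.mul_sum] at hsum
  linarith

lemma re_trace_mul_add_smul_one_mul_self [DecidableEq n] {ρ A : Matrix n n ℂ} (c : ℝ)
    (hρ : ρ.trace = 1) (hρA : (ρ * A).trace = 0) :
    (ρ * (A + (c : ℂ) • 1) * (A + (c : ℂ) • 1)).trace.re = (ρ * A * A).trace.re + c ^ 2 := by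
  have hexpand : ρ * (A + (c : ℂ) • 1) * (A + (c : ℂ) • 1)
      = ρ * A * A + (2 * c : ℂ) • (ρ * A) + (c ^ 2 : ℂ) • ρ := by
    simp only [Matrix.mul_add, Matrix.add_mul, Matrix.mul_smul, Matrix.smul_mul, Matrix.mul_one]
    module
  rw [hexpand, trace_add, trace_add, trace_smul, trace_smul, hρA, hρ]
  simp [← Complex.ofReal_pow]

def IsSymmLogDeriv (ρ ρ' L : Matrix n n ℂ) : Prop :=
  ρ' = (2⁻¹ : ℂ) • (ρ * L + L * ρ)

namespace IsSymmLogDeriv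

variable {ρ ρ' L : Matrix n n ℂ}

lemma trace_eq (h : IsSymmLogDeriv ρ ρ' L) : ρ'.trace = (ρ * L).trace := by
  rw [h, trace_smul, trace_add, trace_mul_comm L, smul_eq_mul]
  ring

lemma trace_mul_self (h : IsSymmLogDeriv ρ ρ' L) : (ρ' * L).trace = (ρ * L * L).trace := by
  rw [h, smul_mul, Matrix.add_mul, trace_smul, trace_add, trace_mul_cycle L ρ L,
    trace_mul_cycle L L ρ, smul_eq_mul]
  ring

lemma re_trace_mul (h : IsSymmLogDeriv ρ ρ' L) (hρ : ρ.IsHermitian) (hL : L.IsHermitian)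
    {B : Matrix n n ℂ} (hB : B.IsHermitian) : (ρ' * B).trace.re = (ρ * L * B).trace.re := by
  rw [h, smul_mul, Matrix.add_mul, trace_smul, trace_add, trace_mul_cycle L ρ B,
    trace_mul_cycle B L ρ, show (2⁻¹ : ℂ) = ((2⁻¹ : ℝ) : ℂ) by norm_num, smul_eq_mul,
    Complex.re_ofReal_mul, Complex.add_re, ← hρ.re_trace_mul_mul_comm hL hB]
  ring

/-- Weighting a state by `λ` moves the classical term `λ' ρ` of `(λ ρ)' = λ ρ' + λ' ρ` into the
SLD as the scalar shift `λ'/λ`. -/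
lemma real_smul [DecidableEq n] (h : IsSymmLogDeriv ρ ρ' L) {l l' : ℝ} (hl : l ≠ 0) :
    IsSymmLogDeriv (l • ρ) (l • ρ' + l' • ρ) (L + ((l' / l : ℝ) : ℂ) • 1) := by
  have hl' : ((l' / l : ℝ) : ℂ) * l = l' := by
    rw [← Complex.ofReal_mul, div_mul_cancel₀ _ hl]
  unfold IsSymmLogDeriv at *
  subst h
  generalize ((l' / l : ℝ) : ℂ) = c at hl'
  simp only [Matrix.mul_add, Matrix.add_mul, Matrix.mul_smul, Matrix.smul_mul, Matrix.mul_one,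
    Matrix.one_mul, ← Complex.coe_smul]
  match_scalars
  · ring
  · ring
  · linear_combination -hl'

end IsSymmLogDeriv

lemma hasDerivAt_trace {ρ : ℝ → Matrix n n ℂ} {ρ' : Matrix n n ℂ} {θ₀ : ℝ}
    (h : ∀ a b, HasDerivAt (fun θ => ρ θ a b) (ρ' a b) θ₀) :
    HasDerivAt (fun θ => (ρ θ).trace) ρ'.trace θ₀ := by
  simpa [trace, diag] using HasDerivAt.fun_sum fun a (_ : a ∈ Finset.univ) => h a a

lemma trace_eq_zero_of_hasDerivAt {ρ : ℝ → Matrix n n ℂ} {ρ' : Matrix n n ℂ} {θ₀ : ℝ} {c : ℂ}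
    (h : ∀ a b, HasDerivAt (fun θ => ρ θ a b) (ρ' a b) θ₀) (htr : ∀ θ, (ρ θ).trace = c) :
    ρ'.trace = 0 :=
  (hasDerivAt_trace h).unique (by simpa only [htr] using hasDerivAt_const θ₀ c)

end Matrix

theorem extended_convexity_qfi_general {d : ℕ} {ι : Type*} [Fintype ι]
    (ρs : ι → ℝ → Matrix (Fin d) (Fin d) ℂ) (lam : ι → ℝ → ℝ) (θ₀ : ℝ)
    (hpos : ∀ i θ, (ρs i θ).PosDef) (htr : ∀ i θ, (ρs i θ).trace = 1)
    (hlampos : ∀ i θ, 0 < lam i θ)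
    (ρs' : ι → Matrix (Fin d) (Fin d) ℂ) (lam' : ι → ℝ)
    (ρ' : Matrix (Fin d) (Fin d) ℂ)
    (hρs' : ∀ i a b, HasDerivAt (fun θ => ρs i θ a b) (ρs' i a b) θ₀)
    (hlam' : ∀ i, HasDerivAt (fun θ => lam i θ) (lam' i) θ₀)
    (hρ' : ∀ a b, HasDerivAt (fun θ => (∑ i, lam i θ • ρs i θ) a b) (ρ' a b) θ₀)
    (L : Matrix (Fin d) (Fin d) ℂ) (Ls : ι → Matrix (Fin d) (Fin d) ℂ)
    (hL : L.IsHermitian) (hLs : ∀ i, (Ls i).IsHermitian)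
    (hSLD : ρ' = (2⁻¹ : ℂ) • ((∑ i, lam i θ₀ • ρs i θ₀) * L + L * (∑ i, lam i θ₀ • ρs i θ₀)))
    (hSLDi : ∀ i, ρs' i = (2⁻¹ : ℂ) • (ρs i θ₀ * Ls i + Ls i * ρs i θ₀)) :
    ((∑ i, lam i θ₀ • ρs i θ₀) * L * L).trace.re
      ≤ ∑ i, lam i θ₀ * ((ρs i θ₀ * Ls i * Ls i).trace.re)
        + ∑ i, (lam' i) ^ 2 / lam i θ₀ := by
  set M : ι → Matrix (Fin d) (Fin d) ℂ := fun i => Ls i + ((lam' i / lam i θ₀ : ℝ) : ℂ) • 1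
  have hρs : ∀ i, (ρs i θ₀).PosSemidef := fun i => (hpos i θ₀).posSemidef
  have hM : ∀ i, (M i).IsHermitian := fun i => (hLs i).add (by simp [IsHermitian])
  have hρ'_eq : ρ' = ∑ i, (lam i θ₀ • ρs' i + lam' i • ρs i θ₀) :=
    ext fun a b => (hρ' a b).unique (hasDerivAt_sum_smul_apply hρs' hlam' a b)
  have hρsLs : ∀ i, (ρs i θ₀ * Ls i).trace = 0 := fun i =>
    (IsSymmLogDeriv.trace_eq (hSLDi i)).symm.trans (trace_eq_zero_of_hasDerivAt (hρs' i) (htr i))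
  have hF : ((∑ i, lam i θ₀ • ρs i θ₀) * L * L).trace.re
      = ∑ i, lam i θ₀ * (ρs i θ₀ * L * L).trace.re := by
    simp [Finset.sum_mul, trace_sum, Complex.re_sum]
  have hF_shift : ((∑ i, lam i θ₀ • ρs i θ₀) * L * L).trace.re
      = ∑ i, lam i θ₀ * (ρs i θ₀ * M i * L).trace.re := by
    rw [← IsSymmLogDeriv.trace_mul_self hSLD, hρ'_eq, Finset.sum_mul, trace_sum, Complex.re_sum]
    refine Finset.sum_congr rfl fun i _ => ?_
    have hSLDi_weighted := IsSymmLogDeriv.real_smul (l' := lam' i) (hSLDi i) (hlampos i θ₀).ne'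
    rw [hSLDi_weighted.re_trace_mul ((hρs i).isHermitian.smul (IsSelfAdjoint.all _)) (hM i) hL,
      smul_mul, smul_mul, trace_smul, Complex.smul_re, smul_eq_mul]
  have hX : ∀ i, (ρs i θ₀ * M i * M i).trace.re
      = (ρs i θ₀ * Ls i * Ls i).trace.re + (lam' i / lam i θ₀) ^ 2 :=
    fun i => re_trace_mul_add_smul_one_mul_self _ (htr i θ₀) (hρsLs i)
  calc ((∑ i, lam i θ₀ • ρs i θ₀) * L * L).trace.re
      = ∑ i, lam i θ₀ * (ρs i θ₀ * L * L).trace.re := hF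
    _ ≤ ∑ i, lam i θ₀ * (ρs i θ₀ * M i * M i).trace.re :=
        sum_re_trace_mul_mul_self_le (fun i => (hlampos i θ₀).le) hρs hM hL (hF_shift.symm.trans hF)
    _ = _ := by
      simp only [hX, mul_add, Finset.sum_add_distrib]
      congr 1
      refine Finset.sum_congr rfl fun i _ => ?_
      field_simp [(hlampos i θ₀).ne']

/-- **Extended convexity of the quantum Fisher information.** Let `ρ(θ) = Σ_i λ_i(θ) ρ_i(θ)` be
a convex combination of differentiable families of positive-definite states with strictly
positive differentiable weights summing to one. If `L` and `L_i` are Hermitian symmetric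
logarithmic derivatives of `ρ` and of each `ρ_i` at `θ₀`, then
`tr(ρ(θ₀)L²) ≤ Σ_i λ_i(θ₀) tr(ρ_i(θ₀)L_i²) + Σ_i λ_i′(θ₀)²/λ_i(θ₀)`. -/
theorem extended_convexity_qfi {d : ℕ} {ι : Type*} [Fintype ι]
    (ρs : ι → ℝ → Matrix (Fin d) (Fin d) ℂ) (lam : ι → ℝ → ℝ) (θ₀ : ℝ)
    (hpos : ∀ i θ, (ρs i θ).PosDef) (htr : ∀ i θ, (ρs i θ).trace = 1)
    (hherm : ∀ i θ, (ρs i θ).IsHermitian)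
    (hlampos : ∀ i θ, 0 < lam i θ) (hlamsum : ∀ θ, ∑ i, lam i θ = 1)
    (ρs' : ι → Matrix (Fin d) (Fin d) ℂ) (lam' : ι → ℝ)
    (ρ' : Matrix (Fin d) (Fin d) ℂ)
    (hρs' : ∀ i a b, HasDerivAt (fun θ => ρs i θ a b) (ρs' i a b) θ₀)
    (hlam' : ∀ i, HasDerivAt (fun θ => lam i θ) (lam' i) θ₀)
    (hρ' : ∀ a b, HasDerivAt (fun θ => (∑ i, lam i θ • ρs i θ) a b) (ρ' a b) θ₀)
    (L : Matrix (Fin d) (Fin d) ℂ) (Ls : ι → Matrix (Fin d) (Fin d) ℂ)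
    (hL : L.IsHermitian) (hLs : ∀ i, (Ls i).IsHermitian)
    (hSLD : ρ' = (2⁻¹ : ℂ) • ((∑ i, lam i θ₀ • ρs i θ₀) * L + L * (∑ i, lam i θ₀ • ρs i θ₀)))
    (hSLDi : ∀ i, ρs' i = (2⁻¹ : ℂ) • (ρs i θ₀ * Ls i + Ls i * ρs i θ₀)) :
    ((∑ i, lam i θ₀ • ρs i θ₀) * L * L).trace.re
      ≤ ∑ i, lam i θ₀ * ((ρs i θ₀ * Ls i * Ls i).trace.re)
        + ∑ i, (lam' i) ^ 2 / lam i θ₀ :=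
  extended_convexity_qfi_general ρs lam θ₀ hpos htr hlampos ρs' lam' ρ' hρs' hlam' hρ' L Ls hL hLs
    hSLD hSLDi
end

section
/- (Integral representation of the matrix logarithm.) Let A be a positive-definite Hermitian d×d complex matrix, and let log A denote its matrix logarithm (obtained by applying the real logarithm to the eigenvalues of A in a unitary eigendecomposition). Then log A = ∫₀^∞ [ (1+t)^{-1} I − (A + tI)^{-1} ] dt, where the integral of the matrix-valued function is taken entrywise. -/
/-!
Conjugating by the unitary `U` that diagonalises `A`, the integrand becomes
`U diag((1+t)⁻¹ - (aₖ+t)⁻¹) U†`, so each entry of the integral is a combination of the scalar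
integrals `∫₀^∞ ((1+t)⁻¹ - (a+t)⁻¹) dt`. These equal `log a`: `log (1+t) - log (a+t)` is an
antiderivative that vanishes at infinity, and its derivative has constant sign, which makes it
integrable.
-/

open Matrix MeasureTheory Set Filter Topology

namespace Real

theorem hasDerivAt_log_add_sub_log_add {b c t : ℝ} (hb : 0 < b + t) (hc : 0 < c + t) :
    HasDerivAt (fun s => log (b + s) - log (c + s)) ((b + t)⁻¹ - (c + t)⁻¹) t := by
  have hlog_add {e : ℝ} (he : 0 < e + t) : HasDerivAt (fun s => log (e + s)) (e + t)⁻¹ t := by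
    simpa using ((hasDerivAt_id t).const_add e).log he.ne'
  exact (hlog_add hb).sub (hlog_add hc)

theorem tendsto_log_add_sub_log_add (b c : ℝ) :
    Tendsto (fun t => log (b + t) - log (c + t)) atTop (𝓝 0) := by
  simpa [add_comm] using (tendsto_log_comp_add_sub_log b).sub (tendsto_log_comp_add_sub_log c)

variable {b c : ℝ}

theorem integrableOn_Ioi_inv_add_sub_inv_add (hb : 0 < b) (hc : 0 < c) :
    IntegrableOn (fun t => (b + t)⁻¹ - (c + t)⁻¹) (Ioi 0) := by
  have hderiv : ∀ t ∈ Ici (0 : ℝ),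
      HasDerivAt (fun s => log (b + s) - log (c + s)) ((b + t)⁻¹ - (c + t)⁻¹) t :=
    fun t ht => hasDerivAt_log_add_sub_log_add (by linarith [ht.out]) (by linarith [ht.out])
  rcases le_total b c with hbc | hcb
  · refine integrableOn_Ioi_deriv_of_nonneg' hderiv (fun t ht => ?_)
      (tendsto_log_add_sub_log_add b c)
    exact sub_nonneg.2 (inv_anti₀ (by linarith [ht.out]) (by linarith))
  · refine integrableOn_Ioi_deriv_of_nonpos' hderiv (fun t ht => ?_)
      (tendsto_log_add_sub_log_add b c)
    exact sub_nonpos.2 (inv_anti₀ (by linarith [ht.out]) (by linarith))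

theorem integral_Ioi_inv_add_sub_inv_add (hb : 0 < b) (hc : 0 < c) :
    ∫ t in Ioi (0 : ℝ), ((b + t)⁻¹ - (c + t)⁻¹) = log c - log b := by
  rw [integral_Ioi_of_hasDerivAt_of_tendsto'
    (fun t ht => hasDerivAt_log_add_sub_log_add (by linarith [ht.out]) (by linarith [ht.out]))
    (integrableOn_Ioi_inv_add_sub_inv_add hb hc) (tendsto_log_add_sub_log_add b c)]
  simp

end Real

namespace Matrix

variable {n : Type*} [Fintype n] [DecidableEq n]

theorem conj_diagonal_apply {R : Type*} [Semiring R] [StarRing R] (U : Matrix n n R) (v : n → R)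
    (i j : n) : (U * diagonal v * Uᴴ) i j = ∑ k, U i k * v k * star (U j k) := by
  rw [mul_apply]
  simp [mul_diagonal, conjTranspose_apply]

variable {K : Type*} [Field K] [StarRing K] {U : Matrix n n K}

theorem smul_one_eq_conj_diagonal (hU : U * Uᴴ = 1) (c : K) :
    c • (1 : Matrix n n K) = U * diagonal (fun _ => c) * Uᴴ := by
  rw [← smul_one_eq_diagonal, Matrix.mul_smul, Matrix.mul_one, Matrix.smul_mul, hU]

theorem conj_diagonal_inv (hU : Uᴴ * U = 1) {v : n → K} (hv : ∀ k, v k ≠ 0) :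
    (U * diagonal v * Uᴴ)⁻¹ = U * diagonal v⁻¹ * Uᴴ := by
  refine inv_eq_right_inv ?_
  calc U * diagonal v * Uᴴ * (U * diagonal v⁻¹ * Uᴴ)
      = U * (diagonal v * (Uᴴ * U) * diagonal v⁻¹) * Uᴴ := by simp only [Matrix.mul_assoc]
    _ = U * Uᴴ := by
      rw [hU, Matrix.mul_one, diagonal_mul_diagonal]
      simp [hv]
    _ = 1 := mul_eq_one_comm.mp hU

theorem smul_one_sub_inv_conj_diagonal_add_smul_one (hU : Uᴴ * U = 1) {v : n → K} {c : K}
    (hv : ∀ k, v k + c ≠ 0) (s : K) :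
    s • 1 - (U * diagonal v * Uᴴ + c • 1)⁻¹ = U * diagonal (fun k => s - (v k + c)⁻¹) * Uᴴ := by
  have hU' := mul_eq_one_comm.mp hU
  rw [smul_one_eq_conj_diagonal hU', smul_one_eq_conj_diagonal hU', ← add_mul, ← mul_add,
    diagonal_add, conj_diagonal_inv hU hv, ← sub_mul, ← mul_sub, diagonal_sub]
  rfl

theorem integral_conj_diagonal_apply {𝕜 α : Type*} [RCLike 𝕜] [MeasurableSpace α] {μ : Measure α}
    (U : Matrix n n 𝕜) {f : n → α → 𝕜} (hf : ∀ k, Integrable (f k) μ) (i j : n) :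
    ∫ x, (U * diagonal (fun k => f k x) * Uᴴ) i j ∂μ
      = (U * diagonal (fun k => ∫ x, f k x ∂μ) * Uᴴ) i j := by
  simp only [conj_diagonal_apply]
  rw [integral_finsetSum _ fun k _ => ((hf k).const_mul _).mul_const _]
  simp only [integral_mul_const, integral_const_mul]

end Matrix

open scoped ComplexOrder

theorem matrix_log_integral_repr_general {d : ℕ}
    (A : Matrix (Fin d) (Fin d) ℂ)
    (Uu : Matrix (Fin d) (Fin d) ℂ) (a : Fin d → ℝ)
    (hUu : Uuᴴ * Uu = 1) (ha : ∀ k, 0 < a k)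
    (hdecomp : A = Uu * Matrix.diagonal (fun k => (a k : ℂ)) * Uuᴴ)
    (logA : Matrix (Fin d) (Fin d) ℂ)
    (hlog : logA = Uu * Matrix.diagonal (fun k => (Real.log (a k) : ℂ)) * Uuᴴ) :
    ∀ i j, logA i j
      = ∫ t in Set.Ioi (0 : ℝ),
          ((((1 + t)⁻¹ : ℝ) • (1 : Matrix (Fin d) (Fin d) ℂ) - (A + (t : ℂ) • 1)⁻¹) i j) := by
  subst hlog
  intro i j
  have hintegrand : ∀ t ∈ Ioi (0 : ℝ),
      ((((1 + t)⁻¹ : ℝ) • (1 : Matrix (Fin d) (Fin d) ℂ) - (A + (t : ℂ) • 1)⁻¹) i j)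
        = (Uu * diagonal (fun k => (((1 + t)⁻¹ - (a k + t)⁻¹ : ℝ) : ℂ)) * Uuᴴ) i j := by
    intro t ht
    have hpos : ∀ k, (a k : ℂ) + t ≠ 0 := fun k => mod_cast (add_pos (ha k) ht).ne'
    rw [← Complex.coe_smul, hdecomp, smul_one_sub_inv_conj_diagonal_add_smul_one hUu hpos]
    push_cast
    rfl
  have hintegrable : ∀ k, IntegrableOn (fun t : ℝ => (((1 + t)⁻¹ - (a k + t)⁻¹ : ℝ) : ℂ)) (Ioi 0) :=
    fun k => (Real.integrableOn_Ioi_inv_add_sub_inv_add one_pos (ha k)).ofReal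
  rw [setIntegral_congr_fun measurableSet_Ioi hintegrand,
    integral_conj_diagonal_apply _ hintegrable]
  simp only [integral_complex_ofReal, Real.integral_Ioi_inv_add_sub_inv_add one_pos, ha,
    Real.log_one, sub_zero]

/-- **Integral representation of the matrix logarithm.** If `A` is positive-definite Hermitian
with unitary eigendecomposition `A = U diag(a) U†` (`a_k > 0`), and
`log A = U diag(log a) U†`, then entrywise
`log A = ∫₀^∞ [(1+t)⁻¹ I − (A + tI)⁻¹] dt`. -/
theorem matrix_log_integral_repr {d : ℕ}
    (A : Matrix (Fin d) (Fin d) ℂ) (hA : A.PosDef)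
    (Uu : Matrix (Fin d) (Fin d) ℂ) (a : Fin d → ℝ)
    (hUu : Uuᴴ * Uu = 1) (ha : ∀ k, 0 < a k)
    (hdecomp : A = Uu * Matrix.diagonal (fun k => (a k : ℂ)) * Uuᴴ)
    (logA : Matrix (Fin d) (Fin d) ℂ)
    (hlog : logA = Uu * Matrix.diagonal (fun k => (Real.log (a k) : ℂ)) * Uuᴴ) :
    ∀ i j, logA i j
      = ∫ t in Set.Ioi (0 : ℝ),
          ((((1 + t)⁻¹ : ℝ) • (1 : Matrix (Fin d) (Fin d) ℂ) - (A + (t : ℂ) • 1)⁻¹) i j) :=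
  matrix_log_integral_repr_general A Uu a hUu ha hdecomp logA hlog
end

section
/- (Commutator identity used in the derivation of the Bogoliubov–Kubo–Mori metric.) Let A be a positive-definite Hermitian d×d complex matrix and B any d×d complex matrix. Then [log A, B] = ∫₀^∞ [ A, (A+tI)^{-1} B (A+tI)^{-1} ] dt, where [X,Y] := XY − YX, log A is the matrix logarithm of A, and the integral of the matrix-valued function is taken entrywise. -/
/-!
Conjugation by the unitary `U` is an algebra automorphism, so with `C = U†BU` both sides are
`U (·) U†` of the corresponding expressions in `diag(a)` and `C`. Commutators with a diagonal
matrix act entrywise, `[diag f, C]ₖₓ = (f k - f x) Cₖₓ`, so the integrand has entries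
`(aₖ - aₓ) / ((aₖ + t)(aₓ + t)) · Cₖₓ`, and the scalar identity
`∫₀^∞ (b - c) / ((b + t)(c + t)) dt = log b - log c` (the integrand is the derivative of
`log (c + t) - log (b + t)`, which vanishes at infinity) turns these into the entries of
`[diag(log a), C]`.
-/

open Matrix MeasureTheory Set Filter
open scoped ComplexOrder Topology

section Scalar

variable {b c : ℝ}

lemma hasDerivAt_log_add_sub_log_add (hb : 0 < b) (hc : 0 < c) {x : ℝ} (hx : 0 ≤ x) :
    HasDerivAt (fun t => Real.log (c + t) - Real.log (b + t))
      ((b - c) / ((b + x) * (c + x))) x := by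
  refine ((((hasDerivAt_id x).const_add c).log (by positivity)).sub
    (((hasDerivAt_id x).const_add b).log (by positivity))).congr_deriv ?_
  simp only [id]
  field_simp
  ring

lemma tendsto_log_add_sub_log_add_atTop (hb : 0 < b) (hc : 0 < c) :
    Tendsto (fun t => Real.log (c + t) - Real.log (b + t)) atTop (𝓝 0) := by
  have hratio : Tendsto (fun t => 1 + (c - b) / (b + t)) atTop (𝓝 1) := by
    have hfrac := tendsto_const_nhds (x := c - b).div_atTop
      (tendsto_atTop_add_const_left _ b tendsto_id)
    simpa using hfrac.const_add (1 : ℝ)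
  have hlog := (Real.continuousAt_log one_ne_zero).tendsto.comp hratio
  rw [Real.log_one] at hlog
  refine hlog.congr' ?_
  filter_upwards [eventually_gt_atTop 0] with t ht
  have hbt : b + t ≠ 0 := by positivity
  rw [Function.comp_apply, ← Real.log_div (by positivity) hbt]
  congr 1
  field_simp
  ring

lemma integrableOn_Ioi_sub_div_mul_add (hb : 0 < b) (hc : 0 < c) :
    IntegrableOn (fun t => (b - c) / ((b + t) * (c + t))) (Ioi 0) := by
  wlog hcb : c ≤ b generalizing b c
  · refine (this hc hb (le_of_not_ge hcb)).neg.congr_fun (fun t _ => ?_) measurableSet_Ioi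
    simp only [Pi.neg_apply]
    rw [← neg_div, neg_sub, mul_comm]
  refine integrableOn_Ioi_deriv_of_nonneg' (fun x hx => hasDerivAt_log_add_sub_log_add hb hc hx)
    (fun x hx => ?_) (tendsto_log_add_sub_log_add_atTop hb hc)
  have hx' : 0 < x := hx
  exact div_nonneg (sub_nonneg.mpr hcb) (by positivity)

lemma integral_Ioi_sub_div_mul_add (hb : 0 < b) (hc : 0 < c) :
    ∫ t in Ioi 0, (b - c) / ((b + t) * (c + t)) = Real.log b - Real.log c := by
  rw [integral_Ioi_of_hasDerivAt_of_tendsto' (fun x hx => hasDerivAt_log_add_sub_log_add hb hc hx)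
    (integrableOn_Ioi_sub_div_mul_add hb hc) (tendsto_log_add_sub_log_add_atTop hb hc)]
  simp

end Scalar

namespace Matrix

lemma diagonal_mul_sub_mul_diagonal {n R : Type*} [Fintype n] [DecidableEq n] [CommRing R]
    (f : n → R) (C : Matrix n n R) :
    diagonal f * C - C * diagonal f = of fun k x => (f k - f x) * C k x := by
  ext k x
  simp only [sub_apply, diagonal_mul, mul_diagonal, of_apply]
  ring

lemma diagonal_mul_sub_mul_diagonal_resolvent {n : Type*} [Fintype n] [DecidableEq n]
    (a : n → ℝ) (t : ℝ) (C : Matrix n n ℂ) :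
    diagonal (fun k => (a k : ℂ)) * ((diagonal fun k => ((a k : ℂ) + t)⁻¹) * C
        * diagonal fun k => ((a k : ℂ) + t)⁻¹)
      - (diagonal fun k => ((a k : ℂ) + t)⁻¹) * C * (diagonal fun k => ((a k : ℂ) + t)⁻¹)
        * diagonal (fun k => (a k : ℂ))
      = of fun k x => (((a k - a x) / ((a k + t) * (a x + t)) : ℝ) : ℂ) * C k x := by
  rw [diagonal_mul_sub_mul_diagonal]
  ext k x
  simp only [of_apply, mul_diagonal, diagonal_mul]
  push_cast
  rw [div_eq_mul_inv, mul_inv]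
  ring

lemma integral_mul_mul_apply {α l m n p 𝕜 : Type*} [MeasurableSpace α] {μ : Measure α}
    [Fintype m] [Fintype n] [RCLike 𝕜] (U : Matrix l m 𝕜) (M : α → Matrix m n 𝕜)
    (V : Matrix n p 𝕜) (hM : ∀ k x, Integrable (fun t => M t k x) μ) (i : l) (j : p) :
    ∫ t, (U * M t * V) i j ∂μ = (U * of (fun k x => ∫ t, M t k x ∂μ) * V) i j := by
  simp only [mul_apply, of_apply, Finset.sum_mul]
  rw [integral_finsetSum _ fun x _ => integrable_finsetSum _ fun k _ =>
    ((hM k x).const_mul _).mul_const _]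
  refine Finset.sum_congr rfl fun x _ => ?_
  rw [integral_finsetSum _ fun k _ => ((hM k x).const_mul _).mul_const _]
  simp only [integral_mul_const, integral_const_mul]

end Matrix

lemma Unitary.conjStarAlgAut_diagonal_add_smul_one_inv {n 𝕜 : Type*} [Fintype n]
    [DecidableEq n] [Field 𝕜] [StarRing 𝕜] (u : unitary (Matrix n n 𝕜)) (v : n → 𝕜) (t : 𝕜)
    (hv : ∀ k, v k + t ≠ 0) :
    (Unitary.conjStarAlgAut 𝕜 _ u (diagonal v) + t • 1)⁻¹
      = Unitary.conjStarAlgAut 𝕜 _ u (diagonal fun k => (v k + t)⁻¹) := by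
  refine inv_eq_right_inv ?_
  rw [← map_one (Unitary.conjStarAlgAut 𝕜 _ u), ← map_smul, ← map_add, ← map_mul,
    smul_one_eq_diagonal, diagonal_add, diagonal_mul_diagonal, ← diagonal_one]
  congr 2 with k
  exact mul_inv_cancel₀ (hv k)

theorem matrix_log_commutator_integral_general {d : ℕ}
    (A B : Matrix (Fin d) (Fin d) ℂ)
    (Uu : Matrix (Fin d) (Fin d) ℂ) (a : Fin d → ℝ)
    (hUu : Uuᴴ * Uu = 1) (ha : ∀ k, 0 < a k)
    (hdecomp : A = Uu * Matrix.diagonal (fun k => (a k : ℂ)) * Uuᴴ)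
    (logA : Matrix (Fin d) (Fin d) ℂ)
    (hlog : logA = Uu * Matrix.diagonal (fun k => (Real.log (a k) : ℂ)) * Uuᴴ) :
    ∀ i j, (logA * B - B * logA) i j
      = ∫ t in Set.Ioi (0 : ℝ),
          ((A * ((A + (t : ℂ) • 1)⁻¹ * B * (A + (t : ℂ) • 1)⁻¹)
            - ((A + (t : ℂ) • 1)⁻¹ * B * (A + (t : ℂ) • 1)⁻¹) * A) i j) := by
  intro i j
  set φ := Unitary.conjStarAlgAut ℂ _ ⟨Uu, mem_unitaryGroup_iff'.mpr hUu⟩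
  have hφ (M : Matrix (Fin d) (Fin d) ℂ) : φ M = Uu * M * Uuᴴ := rfl
  set C := φ.symm B
  set M : ℝ → Matrix (Fin d) (Fin d) ℂ :=
    fun t => of fun k x => (((a k - a x) / ((a k + t) * (a x + t)) : ℝ) : ℂ) * C k x
  rw [← hφ] at hdecomp hlog
  have hintegrand : ∀ t ∈ Ioi (0 : ℝ),
      (A * ((A + (t : ℂ) • 1)⁻¹ * B * (A + (t : ℂ) • 1)⁻¹)
        - ((A + (t : ℂ) • 1)⁻¹ * B * (A + (t : ℂ) • 1)⁻¹) * A) i j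
      = (Uu * M t * Uuᴴ) i j := fun t ht => by
    rw [hdecomp, Unitary.conjStarAlgAut_diagonal_add_smul_one_inv _ _ _
      fun k => by exact_mod_cast (add_pos (ha k) ht).ne', ← φ.apply_symm_apply B, ← map_mul,
      ← map_mul, ← map_mul, ← map_mul, ← map_sub, diagonal_mul_sub_mul_diagonal_resolvent, hφ]
  have hintegrable (k x : Fin d) : Integrable (fun t => M t k x) (volume.restrict (Ioi 0)) :=
    (integrableOn_Ioi_sub_div_mul_add (ha k) (ha x)).ofReal.mul_const _
  rw [setIntegral_congr_fun measurableSet_Ioi hintegrand, integral_mul_mul_apply _ _ _ hintegrable,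
    hlog, ← φ.apply_symm_apply B, ← map_mul, ← map_mul, ← map_sub, diagonal_mul_sub_mul_diagonal,
    hφ]
  refine congrArg (fun N : Matrix (Fin d) (Fin d) ℂ => (Uu * N * Uuᴴ) i j) (ext fun k x => ?_)
  simp only [M, of_apply, integral_mul_const, integral_complex_ofReal,
    integral_Ioi_sub_div_mul_add (ha k) (ha x)]
  push_cast
  rfl

/-- **Commutator identity for the matrix logarithm** (used in the derivation of the
Bogoliubov–Kubo–Mori metric). If `A` is positive-definite Hermitian with unitary
eigendecomposition `A = U diag(a) U†` (`a_k > 0`), `log A = U diag(log a) U†`, and `B` is any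
matrix, then entrywise `[log A, B] = ∫₀^∞ [A, (A+tI)⁻¹ B (A+tI)⁻¹] dt`. -/
theorem matrix_log_commutator_integral {d : ℕ}
    (A B : Matrix (Fin d) (Fin d) ℂ) (hA : A.PosDef)
    (Uu : Matrix (Fin d) (Fin d) ℂ) (a : Fin d → ℝ)
    (hUu : Uuᴴ * Uu = 1) (ha : ∀ k, 0 < a k)
    (hdecomp : A = Uu * Matrix.diagonal (fun k => (a k : ℂ)) * Uuᴴ)
    (logA : Matrix (Fin d) (Fin d) ℂ)
    (hlog : logA = Uu * Matrix.diagonal (fun k => (Real.log (a k) : ℂ)) * Uuᴴ) :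
    ∀ i j, (logA * B - B * logA) i j
      = ∫ t in Set.Ioi (0 : ℝ),
          ((A * ((A + (t : ℂ) • 1)⁻¹ * B * (A + (t : ℂ) • 1)⁻¹)
            - ((A + (t : ℂ) • 1)⁻¹ * B * (A + (t : ℂ) • 1)⁻¹) * A) i j) :=
  matrix_log_commutator_integral_general A B Uu a hUu ha hdecomp logA hlog
end

section
/- (QFI for estimating the direction of a magnetic field.) Fix ω > 0 and t ∈ ℝ, and for θ ∈ ℝ let H_θ := ω(cosθ·σ_z + sinθ·σ_x) be the 2×2 Hermitian matrix with σ_z = [[1,0],[0,−1]] and σ_x = [[0,1],[1,0]]. Let ψ(θ) := exp(−itH_θ)·e₀, where e₀ = (1,0)ᵗ and exp denotes the matrix exponential. Then the pure-state quantum Fisher information F_Q(θ) := 4·[⟨∂_θψ(θ), ∂_θψ(θ)⟩ − |⟨ψ(θ), ∂_θψ(θ)⟩|²] equals 4 sin²(ωt) − sin²(2ωt) sin²θ. -/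
open Matrix

lemma exp_pauli (ω t φ : ℝ) :
    (NormedSpace.exp ((-(t : ℂ) * Complex.I)
        • (ω • (Real.cos φ • (!![1, 0; 0, -1] : Matrix (Fin 2) (Fin 2) ℂ)
            + Real.sin φ • (!![0, 1; 1, 0] : Matrix (Fin 2) (Fin 2) ℂ))))) *ᵥ ![1, 0]
    = ![(Real.cos (ω*t) : ℂ) - Complex.I * Real.sin (ω*t) * Real.cos φ,
        -(Complex.I * Real.sin (ω*t) * Real.sin φ)] := by
  set c : ℂ := (Real.cos (φ/2) : ℂ) with hc
  set s : ℂ := (Real.sin (φ/2) : ℂ) with hs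
  have hcs : c^2 + s^2 = 1 := by
    have := Real.sin_sq_add_cos_sq (φ/2)
    rw [hc, hs]; norm_cast; linarith
  have hcos : c^2 - s^2 = Complex.cos φ := by
    have h2 : Real.cos φ = Real.cos (φ/2)^2 - Real.sin (φ/2)^2 := by
      have h := Real.cos_two_mul (φ/2)
      rw [show 2*(φ/2) = φ by ring] at h
      have h' := Real.sin_sq_add_cos_sq (φ/2)
      linarith
    rw [← Complex.ofReal_cos, h2, hc, hs]; push_cast; ring
  have hsin : 2 * c * s = Complex.sin φ := by
    have h2 : Real.sin φ = 2 * Real.sin (φ/2) * Real.cos (φ/2) := by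
      have h := Real.sin_two_mul (φ/2)
      rw [show 2*(φ/2) = φ by ring] at h
      linarith
    rw [← Complex.ofReal_sin, h2, hc, hs]; push_cast; ring
  set U : (Matrix (Fin 2) (Fin 2) ℂ)ˣ :=
    ⟨!![c, -s; s, c], !![c, s; -s, c], by
      ext i j; fin_cases i <;> fin_cases j <;>
        simp [Matrix.mul_apply, Fin.sum_univ_two] <;>
        first | ring1 | linear_combination hcs, by
      ext i j; fin_cases i <;> fin_cases j <;>
        simp [Matrix.mul_apply, Fin.sum_univ_two] <;>
        first | ring1 | linear_combination hcs⟩ with hU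
  set w : ℂ := -(t : ℂ) * Complex.I * ω with hw
  have hdiag : Matrix.diagonal ![w, -w] = !![w, 0; 0, -w] := by
    ext i j; fin_cases i <;> fin_cases j <;> simp [Matrix.diagonal]
  have hM : ((-(t : ℂ) * Complex.I)
        • (ω • (Real.cos φ • (!![1, 0; 0, -1] : Matrix (Fin 2) (Fin 2) ℂ)
            + Real.sin φ • (!![0, 1; 1, 0] : Matrix (Fin 2) (Fin 2) ℂ))))
      = (U : Matrix (Fin 2) (Fin 2) ℂ) * Matrix.diagonal ![w, -w]
          * ((U⁻¹ : (Matrix (Fin 2) (Fin 2) ℂ)ˣ) : Matrix (Fin 2) (Fin 2) ℂ) := by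
    have hUinv : ((U⁻¹ : (Matrix (Fin 2) (Fin 2) ℂ)ˣ) : Matrix (Fin 2) (Fin 2) ℂ)
        = !![c, s; -s, c] := rfl
    rw [hUinv, hdiag]
    ext i j
    fin_cases i <;> fin_cases j <;>
      simp [hU, Matrix.mul_apply, Fin.sum_univ_two, hw] <;>
      first
        | linear_combination (-(t:ℂ)*Complex.I*ω) * hcos
        | linear_combination (-(t:ℂ)*Complex.I*ω) * hsin
        | linear_combination ((t:ℂ)*Complex.I*ω) * hcos
        | linear_combination ((t:ℂ)*Complex.I*ω) * hsin
  rw [hM, Matrix.exp_units_conj, Matrix.exp_diagonal]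
  have hexp : NormedSpace.exp ![w, -w] = ![Complex.exp w, Complex.exp (-w)] := by
    funext i
    fin_cases i <;> rw [Pi.coe_exp] <;> simp [← Complex.exp_eq_exp_ℂ]
  rw [hexp]
  have hew : Complex.exp w = Complex.cos (ω*t) - Complex.I * Complex.sin (ω*t) := by
    rw [hw, show -(t:ℂ) * Complex.I * ω = (-((ω*t : ℝ) : ℂ)) * Complex.I by push_cast; ring,
      Complex.exp_mul_I, Complex.cos_neg, Complex.sin_neg]
    push_cast; ring
  have hew' : Complex.exp (-w) = Complex.cos (ω*t) + Complex.I * Complex.sin (ω*t) := by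
    rw [hw, show -(-(t:ℂ) * Complex.I * ω) = (((ω*t : ℝ) : ℂ)) * Complex.I by push_cast; ring,
      Complex.exp_mul_I]
    push_cast; ring
  have hdiag2 : Matrix.diagonal ![Complex.exp w, Complex.exp (-w)]
      = !![Complex.exp w, 0; 0, Complex.exp (-w)] := by
    ext i j; fin_cases i <;> fin_cases j <;> simp [Matrix.diagonal]
  have hUinv : ((U⁻¹ : (Matrix (Fin 2) (Fin 2) ℂ)ˣ) : Matrix (Fin 2) (Fin 2) ℂ)
      = !![c, s; -s, c] := rfl
  rw [hdiag2, hUinv]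
  funext i
  fin_cases i <;>
    simp [hU, Matrix.mulVec, Matrix.mul_apply, dotProduct, Fin.sum_univ_two, hew, hew',
      Complex.ofReal_cos, Complex.ofReal_sin] <;>
    set C := Complex.cos ((ω:ℂ)*(t:ℂ)) with hC <;>
    set S := Complex.sin ((ω:ℂ)*(t:ℂ)) with hS <;>
    first
      | linear_combination C * hcs - Complex.I * S * hcos
      | linear_combination (-(Complex.I) * S) * hsin
      | linear_combination (Complex.I * S) * hsin

/-- **QFI for estimating the direction of a magnetic field.** For the qubit model
`ψ(θ) = exp(−it·ω(cosθ σ_z + sinθ σ_x)) e₀` with `e₀ = (1,0)ᵗ`, the pure-state quantum Fisher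
information `4·[⟨∂_θψ, ∂_θψ⟩ − |⟨ψ, ∂_θψ⟩|²]` equals `4 sin²(ωt) − sin²(2ωt) sin²θ`. -/
theorem qfi_direction_magnetic_field (ω t θ : ℝ) (hω : 0 < ω)
    (σz σx : Matrix (Fin 2) (Fin 2) ℂ)
    (hσz : σz = !![1, 0; 0, -1]) (hσx : σx = !![0, 1; 1, 0])
    (ψ : ℝ → (Fin 2 → ℂ))
    (hψ : ∀ φ : ℝ, ψ φ
      = (NormedSpace.exp ((-(t : ℂ) * Complex.I)
          • (ω • (Real.cos φ • σz + Real.sin φ • σx)))) *ᵥ ![1, 0])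
    (ψ' : Fin 2 → ℂ)
    (hψ' : ∀ i, HasDerivAt (fun φ => ψ φ i) (ψ' i) θ) :
    4 * ((star ψ' ⬝ᵥ ψ').re - ‖star (ψ θ) ⬝ᵥ ψ'‖ ^ 2)
      = 4 * Real.sin (ω * t) ^ 2 - Real.sin (2 * ω * t) ^ 2 * Real.sin θ ^ 2 := by
  have hψe : ∀ φ : ℝ, ψ φ
      = ![(Real.cos (ω*t) : ℂ) - Complex.I * Real.sin (ω*t) * Real.cos φ,
          -(Complex.I * Real.sin (ω*t) * Real.sin φ)] := by
    intro φ
    rw [hψ φ, hσz, hσx, exp_pauli]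
  set C : ℝ := Real.cos (ω*t) with hC
  set S : ℝ := Real.sin (ω*t) with hS
  clear_value C S
  -- explicit derivatives
  have hd0 : HasDerivAt (fun φ => ψ φ 0)
      (Complex.I * S * Real.sin θ) θ := by
    have : (fun φ : ℝ => ψ φ 0)
        = fun φ : ℝ => (C : ℂ) - Complex.I * S * Real.cos φ := by
      funext φ; rw [hψe φ]; simp
    rw [this]
    have h1 : HasDerivAt (fun φ : ℝ => ((Real.cos φ : ℝ) : ℂ))
        (-Real.sin θ : ℝ) θ := (Real.hasDerivAt_cos θ).ofReal_comp
    have h2 := h1.const_mul (Complex.I * S)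
    have h3 := (hasDerivAt_const θ (C : ℂ)).sub h2
    convert h3 using 1
    case e'_4 => rfl
    case e'_8 => rfl
    push_cast; ring
  have hd1 : HasDerivAt (fun φ => ψ φ 1)
      (-(Complex.I * S * Real.cos θ)) θ := by
    have : (fun φ : ℝ => ψ φ 1)
        = fun φ : ℝ => -(Complex.I * S * Real.sin φ) := by
      funext φ; rw [hψe φ]; simp
    rw [this]
    have h1 : HasDerivAt (fun φ : ℝ => ((Real.sin φ : ℝ) : ℂ))
        (Real.cos θ : ℝ) θ := (Real.hasDerivAt_sin θ).ofReal_comp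
    have h2 := (h1.const_mul (Complex.I * S)).neg
    exact h2
  have e0 : ψ' 0 = Complex.I * S * Real.sin θ := (hψ' 0).unique hd0
  have e1 : ψ' 1 = -(Complex.I * S * Real.cos θ) := (hψ' 1).unique hd1
  have hpyth : ((Real.sin θ : ℂ))^2 + ((Real.cos θ : ℂ))^2 = 1 := by
    have := Real.sin_sq_add_cos_sq θ
    push_cast
    exact_mod_cast this
  have hdot1 : star ψ' ⬝ᵥ ψ' = ((S^2 : ℝ) : ℂ) := by
    simp only [dotProduct, Fin.sum_univ_two, Pi.star_apply, e0, e1, RCLike.star_def,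
      _root_.map_mul, map_neg, Complex.conj_ofReal, Complex.conj_I, Complex.ofReal_pow]
    linear_combination (-((S:ℂ)^2) * (((Real.sin θ : ℂ))^2 + ((Real.cos θ : ℂ))^2)) * Complex.I_sq
      + ((S:ℂ)^2) * hpyth
  have hdot2 : star (ψ θ) ⬝ᵥ ψ' = Complex.I * ((C * S * Real.sin θ : ℝ) : ℂ) := by
    rw [hψe θ]
    simp only [dotProduct, Fin.sum_univ_two, Pi.star_apply, e0, e1, RCLike.star_def,
      map_sub, _root_.map_mul, map_neg, Complex.conj_ofReal, Complex.conj_I,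
      Matrix.cons_val_zero, Matrix.cons_val_one, Matrix.head_cons,
      Complex.ofReal_pow, Complex.ofReal_mul]
    ring
  have habs : ‖star (ψ θ) ⬝ᵥ ψ'‖^2 = (C * S * Real.sin θ)^2 := by
    rw [hdot2, norm_mul, Complex.norm_I, Complex.norm_real, one_mul, Real.norm_eq_abs, sq_abs]
  rw [hdot1, habs, Complex.ofReal_re]
  have h2 : Real.sin (2*ω*t) = 2 * S * C := by
    rw [show 2*ω*t = 2*(ω*t) by ring, Real.sin_two_mul, hS, hC]
  rw [h2]
  ring
end
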